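/- The five elements θ, ϑ, RL, LR, [R,L] of F[a,b,c] ⊗ U(sl₂) mutually commute (every pair of them commutes). -/

import Mathlib

open scoped TensorProduct

noncomputable section

namespace RacahPaper

variable (F : Type) [Field F]

/-- Defining relations of `U(sl₂)`: generators `e = ι 0`, `f = ι 1`, `h = ι 2` with
`he - eh = 2e`, `hf - fh = -2f`, `ef - fe = h`. -/
inductive slRel : FreeAlgebra F (Fin 3) → FreeAlgebra F (Fin 3) → Prop
  | he : slRel (FreeAlgebra.ι F 2 * FreeAlgebra.ι F 0 - FreeAlgebra.ι F 0 * FreeAlgebra.ι F 2)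
      (2 * FreeAlgebra.ι F 0)
  | hf : slRel (FreeAlgebra.ι F 2 * FreeAlgebra.ι F 1 - FreeAlgebra.ι F 1 * FreeAlgebra.ι F 2)
      (-(2 * FreeAlgebra.ι F 1))
  | ef : slRel (FreeAlgebra.ι F 0 * FreeAlgebra.ι F 1 - FreeAlgebra.ι F 1 * FreeAlgebra.ι F 0)
      (FreeAlgebra.ι F 2)

/-- The universal enveloping algebra `U(sl₂)`. -/
abbrev U := RingQuot (slRel F)

/-- The generator `e` of `U(sl₂)`. -/
def e : U F := RingQuot.mkAlgHom F (slRel F) (FreeAlgebra.ι F 0)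

/-- The generator `f` of `U(sl₂)`. -/
def f : U F := RingQuot.mkAlgHom F (slRel F) (FreeAlgebra.ι F 1)

/-- The generator `h` of `U(sl₂)`. -/
def h : U F := RingQuot.mkAlgHom F (slRel F) (FreeAlgebra.ι F 2)

/-- The equitable generator `x = -f - h/2`. -/
def ux : U F := -f F - (2 : F)⁻¹ • h F

/-- The equitable generator `y = h/2`. -/
def uy : U F := (2 : F)⁻¹ • h F

/-- The equitable generator `z = e - h/2`. -/
def uz : U F := e F - (2 : F)⁻¹ • h F

/-- The normalized Casimir element `Λ = ef + h(h-2)/4` of `U(sl₂)`. -/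
def Lam : U F := e F * f F + (4 : F)⁻¹ • (h F * (h F - 2))

/-- `ν_x = f/2`. -/
def nux : U F := (2 : F)⁻¹ • f F

/-- `ν_z = e/2`. -/
def nuz : U F := (2 : F)⁻¹ • e F

/-- `U_n`: the span of the `e^i h^j f^k` with `k - i = n`. -/
def Usub (n : ℤ) : Submodule F (U F) :=
  Submodule.span F {u : U F | ∃ i j k : ℕ, (k : ℤ) - (i : ℤ) = n ∧ u = e F ^ i * h F ^ j * f F ^ k}

-- Racah algebra
/-- Generator `A` of the free algebra. -/
def fA : FreeAlgebra F (Fin 4) := FreeAlgebra.ι F 0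
/-- Generator `B` of the free algebra. -/
def fB : FreeAlgebra F (Fin 4) := FreeAlgebra.ι F 1
/-- Generator `C` of the free algebra. -/
def fC : FreeAlgebra F (Fin 4) := FreeAlgebra.ι F 2
/-- Generator `D` of the free algebra. -/
def fD : FreeAlgebra F (Fin 4) := FreeAlgebra.ι F 3

/-- `α = [A,D] + AC - BA` in the free algebra. -/
def falpha : FreeAlgebra F (Fin 4) := (fA F * fD F - fD F * fA F) + fA F * fC F - fB F * fA F
/-- `β = [B,D] + BA - CB` in the free algebra. -/
def fbeta : FreeAlgebra F (Fin 4) := (fB F * fD F - fD F * fB F) + fB F * fA F - fC F * fB F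
/-- `γ = [C,D] + CB - AC` in the free algebra. -/
def fgamma : FreeAlgebra F (Fin 4) := (fC F * fD F - fD F * fC F) + fC F * fB F - fA F * fC F

/-- Defining relations of the Racah algebra: `[A,B] = [B,C] = [C,A] = 2D` and each of
`α, β, γ` commutes with each of the generators `A, B, C, D`. -/
inductive racahRel : FreeAlgebra F (Fin 4) → FreeAlgebra F (Fin 4) → Prop
  | AB : racahRel (fA F * fB F - fB F * fA F) (2 * fD F)
  | BC : racahRel (fB F * fC F - fC F * fB F) (2 * fD F)
  | CA : racahRel (fC F * fA F - fA F * fC F) (2 * fD F)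
  | calpha (i : Fin 4) : racahRel (falpha F * FreeAlgebra.ι F i) (FreeAlgebra.ι F i * falpha F)
  | cbeta (i : Fin 4) : racahRel (fbeta F * FreeAlgebra.ι F i) (FreeAlgebra.ι F i * fbeta F)
  | cgamma (i : Fin 4) : racahRel (fgamma F * FreeAlgebra.ι F i) (FreeAlgebra.ι F i * fgamma F)

/-- The Racah algebra `ℜ`. -/
abbrev Racah := RingQuot (racahRel F)

/-- Generator `A` of the Racah algebra. -/
def A : Racah F := RingQuot.mkAlgHom F (racahRel F) (fA F)
/-- Generator `B` of the Racah algebra. -/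
def B : Racah F := RingQuot.mkAlgHom F (racahRel F) (fB F)
/-- Generator `C` of the Racah algebra. -/
def C : Racah F := RingQuot.mkAlgHom F (racahRel F) (fC F)
/-- Generator `D` of the Racah algebra. -/
def D : Racah F := RingQuot.mkAlgHom F (racahRel F) (fD F)

/-- `α = [A,D] + AC - BA` in the Racah algebra. -/
def alpha : Racah F := (A F * D F - D F * A F) + A F * C F - B F * A F
/-- `β = [B,D] + BA - CB` in the Racah algebra. -/
def beta : Racah F := (B F * D F - D F * B F) + B F * A F - C F * B F
/-- `γ = [C,D] + CB - AC` in the Racah algebra. -/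
def gamma : Racah F := (C F * D F - D F * C F) + C F * B F - A F * C F
/-- `δ = A + B + C` in the Racah algebra. -/
def delta : Racah F := A F + B F + C F

/-- `Ω_A = D² + (BAC + CAB)/2 + A² + Bγ - Cβ - Aδ`. -/
def OmegaA : Racah F :=
  D F ^ 2 + (2 : F)⁻¹ • (B F * A F * C F + C F * A F * B F) + A F ^ 2
    + B F * gamma F - C F * beta F - A F * delta F

/-- `Ω_B = D² + (CBA + ABC)/2 + B² + Cα - Aγ - Bδ`. -/
def OmegaB : Racah F :=
  D F ^ 2 + (2 : F)⁻¹ • (C F * B F * A F + A F * B F * C F) + B F ^ 2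
    + C F * alpha F - A F * gamma F - B F * delta F

/-- `Ω_C = D² + (ACB + BCA)/2 + C² + Aβ - Bα - Cδ`. -/
def OmegaC : Racah F :=
  D F ^ 2 + (2 : F)⁻¹ • (A F * C F * B F + B F * C F * A F) + C F ^ 2
    + A F * beta F - B F * alpha F - C F * delta F

-- the tensor algebra F[a,b,c] ⊗ U(sl2)
/-- The polynomial algebra `F[a,b,c]`. -/
abbrev P := MvPolynomial (Fin 3) F

/-- The tensor product algebra `F[a,b,c] ⊗ U(sl₂)`. -/
abbrev T := P F ⊗[F] U F

/-- The indeterminate `a`. -/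
def pa : P F := MvPolynomial.X 0
/-- The indeterminate `b`. -/
def pb : P F := MvPolynomial.X 1
/-- The indeterminate `c`. -/
def pc : P F := MvPolynomial.X 2

/-- `A♮`. -/
def Anat : T F :=
  (pa F * (pa F + 1)) ⊗ₜ[F] (1 : U F) + (pb F - pc F - pa F) ⊗ₜ[F] ux F
    + (pa F + pb F - pc F + 1) ⊗ₜ[F] uy F - (1 : P F) ⊗ₜ[F] (ux F * uy F)

/-- `B♮`. -/
def Bnat : T F :=
  (pb F * (pb F + 1)) ⊗ₜ[F] (1 : U F) + (pc F - pa F - pb F) ⊗ₜ[F] uy F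
    + (pb F + pc F - pa F + 1) ⊗ₜ[F] uz F - (1 : P F) ⊗ₜ[F] (uy F * uz F)

/-- `C♮`. -/
def Cnat : T F :=
  (pc F * (pc F + 1)) ⊗ₜ[F] (1 : U F) + (pa F - pb F - pc F) ⊗ₜ[F] uz F
    + (pc F + pa F - pb F + 1) ⊗ₜ[F] ux F - (1 : P F) ⊗ₜ[F] (uz F * ux F)

/-- `D♮`. -/
def Dnat : T F :=
  (1 : P F) ⊗ₜ[F] (uz F * uy F * ux F + uz F * ux F)
    + (pc F + pb F * (pc F + pa F - pb F)) ⊗ₜ[F] ux F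
    + (pa F + pc F * (pa F + pb F - pc F)) ⊗ₜ[F] uy F
    + (pb F + pa F * (pb F + pc F - pa F)) ⊗ₜ[F] uz F
    + (pb F - pc F) ⊗ₜ[F] (ux F * uy F)
    + (pc F - pa F) ⊗ₜ[F] (uy F * uz F)
    + (pa F - pb F) ⊗ₜ[F] (uz F * ux F)

/-- `R = 2 ⊗ yν_x + 2(c+a-b+1) ⊗ ν_x`. -/
def Rel : T F :=
  (2 : P F) ⊗ₜ[F] (uy F * nux F) + (2 * (pc F + pa F - pb F + 1)) ⊗ₜ[F] nux F

/-- `L = -2 ⊗ yν_z - 2(a-b-c-1) ⊗ ν_z`. -/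
def Lel : T F :=
  -((2 : P F) ⊗ₜ[F] (uy F * nuz F)) - (2 * (pa F - pb F - pc F - 1)) ⊗ₜ[F] nuz F

/-- `θ = 1⊗y - b⊗1`. -/
def theta : T F := (1 : P F) ⊗ₜ[F] uy F - pb F ⊗ₜ[F] (1 : U F)

/-- `ϑ = 1⊗y + a⊗1`. -/
def vartheta : T F := (1 : P F) ⊗ₜ[F] uy F + pa F ⊗ₜ[F] (1 : U F)

/-- `F[a,b,c] ⊗ U_n` as a subspace of `F[a,b,c] ⊗ U(sl₂)`. -/
def TU (n : ℤ) : Submodule F (T F) :=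
  Submodule.span F {t : T F | ∃ (p : P F) (u : U F), u ∈ Usub F n ∧ t = p ⊗ₜ[F] u}

/-!
All five elements lie in the subalgebra of `F[a,b,c] ⊗ U(sl₂)` generated by the pure tensors
`p ⊗ u` with `u ∈ F[y, Λ]`, which is commutative because `y` commutes with the Casimir element `Λ`.
For `θ` and `ϑ` this is immediate. The relations `ν_x y = (y + 1) ν_x` and `ν_z y = (y - 1) ν_z`
allow one to write `R` and `L` with the factor `1 ⊗ ν_x`, resp. `1 ⊗ ν_z`, on either side of an
element affine in `1 ⊗ y`; so in `RL` and `LR` the two factors meet in the middle, and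
`ν_x ν_z = (Λ - y² - y)/4` and `ν_z ν_x = (Λ - y² + y)/4` lie in `F[y, Λ]`.
-/

theorem _root_.Algebra.commute_of_mem_adjoin {R A : Type*} [CommSemiring R] [Semiring A]
    [Algebra R A] {s : Set A} (hs : ∀ x ∈ s, ∀ y ∈ s, Commute x y) {a b : A}
    (ha : a ∈ Algebra.adjoin R s) (hb : b ∈ Algebra.adjoin R s) : Commute a b :=
  Algebra.commute_of_mem_adjoin_of_forall_mem_commute hb fun _ hc ↦
    (Algebra.commute_of_mem_adjoin_of_forall_mem_commute ha fun _ hd ↦ hs _ hc _ hd).symm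

lemma h_mul_e : h F * e F = e F * h F + 2 * e F := by
  have := RingQuot.mkAlgHom_rel F (slRel.he (F := F))
  simp only [map_sub, map_mul, map_ofNat] at this
  exact eq_add_of_sub_eq' this

lemma f_mul_h : f F * h F = h F * f F + 2 * f F := by
  have := RingQuot.mkAlgHom_rel F (slRel.hf (F := F))
  simp only [map_sub, map_mul, map_neg, map_ofNat] at this
  exact eq_add_of_sub_eq' ((neg_sub _ _).symm.trans ((congrArg Neg.neg this).trans (neg_neg _)))

lemma e_mul_f : e F * f F = f F * e F + h F := by
  have := RingQuot.mkAlgHom_rel F (slRel.ef (F := F))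
  simp only [map_sub, map_mul] at this
  exact eq_add_of_sub_eq' this

lemma commute_h_e_mul_f : Commute (h F) (e F * f F) :=
  calc h F * (e F * f F) = (e F * h F + 2 * e F) * f F := by rw [← mul_assoc, h_mul_e]
    _ = e F * (h F * f F + 2 * f F) := by simp only [add_mul, mul_add, mul_assoc, two_mul]
    _ = e F * f F * h F := by rw [← f_mul_h, mul_assoc]

lemma commute_uy_Lam : Commute (uy F) (Lam F) := by
  have hh : Commute (h F) (h F * (h F - 2)) :=
    (Commute.refl _).mul_right ((Commute.refl _).sub_right (Commute.ofNat_right _ 2))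
  exact ((commute_h_e_mul_f F).add_right (hh.smul_right _)).smul_left _

lemma inv_four {K : Type*} [Field K] : (4 : K)⁻¹ = 2⁻¹ * 2⁻¹ := by
  rw [← mul_inv]; norm_num

lemma nux_mul_uy : nux F * uy F = (uy F + 1) * nux F := by
  simp only [nux, uy, add_mul, one_mul, smul_mul_assoc, mul_smul_comm, smul_smul, f_mul_h, two_mul,
    smul_add]
  match_scalars <;> grind

lemma nuz_mul_uy : nuz F * uy F = (uy F - 1) * nuz F := by
  simp only [nuz, uy, sub_mul, one_mul, smul_mul_assoc, mul_smul_comm, smul_smul, h_mul_e, two_mul,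
    smul_add]
  match_scalars <;> grind

lemma nux_mul_nuz : nux F * nuz F = (4 : F)⁻¹ • (Lam F - uy F ^ 2 - uy F) := by
  simp only [nux, nuz, Lam, uy, pow_two, smul_mul_assoc, mul_smul_comm, smul_smul, mul_sub,
    smul_sub, smul_add, e_mul_f, mul_two, inv_four]
  match_scalars <;> grind

lemma nuz_mul_nux : nuz F * nux F = (4 : F)⁻¹ • (Lam F - uy F ^ 2 + uy F) := by
  simp only [nux, nuz, Lam, uy, pow_two, smul_mul_assoc, mul_smul_comm, smul_smul, mul_sub,
    smul_sub, smul_add, mul_two, inv_four]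
  match_scalars <;> grind

def yLamSubalgebra : Subalgebra F (U F) := Algebra.adjoin F {uy F, Lam F}

def tensorYLamSubalgebra : Subalgebra F (T F) :=
  Algebra.adjoin F {t | ∃ (p : P F), ∃ u ∈ yLamSubalgebra F, t = p ⊗ₜ[F] u}

lemma commute_of_mem_yLamSubalgebra {u v : U F} (hu : u ∈ yLamSubalgebra F)
    (hv : v ∈ yLamSubalgebra F) : Commute u v :=
  Algebra.commute_of_mem_adjoin (by simp [commute_uy_Lam, (commute_uy_Lam F).symm]) hu hv

lemma commute_of_mem_tensorYLamSubalgebra {s t : T F} (hs : s ∈ tensorYLamSubalgebra F)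
    (ht : t ∈ tensorYLamSubalgebra F) : Commute s t := by
  refine Algebra.commute_of_mem_adjoin ?_ hs ht
  rintro _ ⟨p, u, hu, rfl⟩ _ ⟨q, v, hv, rfl⟩
  exact (Commute.all p q).tmul (commute_of_mem_yLamSubalgebra F hu hv)

lemma uy_mem_yLamSubalgebra : uy F ∈ yLamSubalgebra F :=
  Algebra.subset_adjoin (by simp)

lemma Lam_mem_yLamSubalgebra : Lam F ∈ yLamSubalgebra F :=
  Algebra.subset_adjoin (by simp)

lemma nux_mul_nuz_mem_yLamSubalgebra : nux F * nuz F ∈ yLamSubalgebra F := by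
  have hy := uy_mem_yLamSubalgebra F
  rw [nux_mul_nuz]
  exact Subalgebra.smul_mem _ (sub_mem (sub_mem (Lam_mem_yLamSubalgebra F) (pow_mem hy 2)) hy) _

lemma nuz_mul_nux_mem_yLamSubalgebra : nuz F * nux F ∈ yLamSubalgebra F := by
  have hy := uy_mem_yLamSubalgebra F
  rw [nuz_mul_nux]
  exact Subalgebra.smul_mem _ (add_mem (sub_mem (Lam_mem_yLamSubalgebra F) (pow_mem hy 2)) hy) _

lemma tmul_mem_tensorYLamSubalgebra (p : P F) {u : U F} (hu : u ∈ yLamSubalgebra F) :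
    p ⊗ₜ[F] u ∈ tensorYLamSubalgebra F :=
  Algebra.subset_adjoin ⟨p, u, hu, rfl⟩

lemma tmul_add_tmul_mem_tensorYLamSubalgebra (p q : P F) {u v : U F} (hu : u ∈ yLamSubalgebra F)
    (hv : v ∈ yLamSubalgebra F) : p ⊗ₜ[F] u + q ⊗ₜ[F] v ∈ tensorYLamSubalgebra F :=
  add_mem (tmul_mem_tensorYLamSubalgebra F p hu) (tmul_mem_tensorYLamSubalgebra F q hv)

open Algebra.TensorProduct in
lemma Rel_eq_mul_one_tmul_nux :
    Rel F = ((2 : P F) ⊗ₜ[F] uy F + (2 * (pc F + pa F - pb F + 1)) ⊗ₜ[F] (1 : U F))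
      * ((1 : P F) ⊗ₜ[F] nux F) := by
  simp [Rel, add_mul, tmul_mul_tmul]

open Algebra.TensorProduct in
lemma Rel_eq_one_tmul_nux_mul :
    Rel F = ((1 : P F) ⊗ₜ[F] nux F)
      * ((2 : P F) ⊗ₜ[F] (uy F - 1) + (2 * (pc F + pa F - pb F + 1)) ⊗ₜ[F] (1 : U F)) := by
  simp [Rel, mul_add, tmul_mul_tmul, mul_sub, nux_mul_uy, add_mul]

open Algebra.TensorProduct in
lemma Lel_eq_mul_one_tmul_nuz :
    Lel F = ((-2 : P F) ⊗ₜ[F] uy F + (2 * (pb F + pc F - pa F + 1)) ⊗ₜ[F] (1 : U F))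
      * ((1 : P F) ⊗ₜ[F] nuz F) := by
  simp only [Lel, add_mul, tmul_mul_tmul, one_mul, mul_one]
  rw [sub_eq_add_neg, ← TensorProduct.neg_tmul, ← TensorProduct.neg_tmul]
  congr 2
  ring

open Algebra.TensorProduct in
lemma Lel_eq_one_tmul_nuz_mul :
    Lel F = ((1 : P F) ⊗ₜ[F] nuz F)
      * ((-2 : P F) ⊗ₜ[F] (uy F + 1) + (2 * (pb F + pc F - pa F + 1)) ⊗ₜ[F] (1 : U F)) := by
  simp only [Lel, mul_add, tmul_mul_tmul, one_mul, mul_one, nuz_mul_uy, sub_mul, sub_add_cancel]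
  rw [sub_eq_add_neg, ← TensorProduct.neg_tmul, ← TensorProduct.neg_tmul]
  congr 2
  ring

lemma theta_mem_tensorYLamSubalgebra : theta F ∈ tensorYLamSubalgebra F :=
  sub_mem (tmul_mem_tensorYLamSubalgebra F 1 (uy_mem_yLamSubalgebra F))
    (tmul_mem_tensorYLamSubalgebra F _ (one_mem _))

lemma vartheta_mem_tensorYLamSubalgebra : vartheta F ∈ tensorYLamSubalgebra F :=
  tmul_add_tmul_mem_tensorYLamSubalgebra F _ _ (uy_mem_yLamSubalgebra F) (one_mem _)

open Algebra.TensorProduct in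
lemma Rel_mul_Lel_mem_tensorYLamSubalgebra : Rel F * Lel F ∈ tensorYLamSubalgebra F := by
  have hy := uy_mem_yLamSubalgebra F
  rw [Rel_eq_mul_one_tmul_nux, Lel_eq_one_tmul_nuz_mul, mul_assoc,
    ← mul_assoc ((1 : P F) ⊗ₜ[F] nux F), tmul_mul_tmul, mul_one]
  exact mul_mem (tmul_add_tmul_mem_tensorYLamSubalgebra F _ _ hy (one_mem _))
    (mul_mem (tmul_mem_tensorYLamSubalgebra F _ (nux_mul_nuz_mem_yLamSubalgebra F))
      (tmul_add_tmul_mem_tensorYLamSubalgebra F _ _ (add_mem hy (one_mem _)) (one_mem _)))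

open Algebra.TensorProduct in
lemma Lel_mul_Rel_mem_tensorYLamSubalgebra : Lel F * Rel F ∈ tensorYLamSubalgebra F := by
  have hy := uy_mem_yLamSubalgebra F
  rw [Lel_eq_mul_one_tmul_nuz, Rel_eq_one_tmul_nux_mul, mul_assoc,
    ← mul_assoc ((1 : P F) ⊗ₜ[F] nuz F), tmul_mul_tmul, mul_one]
  exact mul_mem (tmul_add_tmul_mem_tensorYLamSubalgebra F _ _ hy (one_mem _))
    (mul_mem (tmul_mem_tensorYLamSubalgebra F _ (nuz_mul_nux_mem_yLamSubalgebra F))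
      (tmul_add_tmul_mem_tensorYLamSubalgebra F _ _ (sub_mem hy (one_mem _)) (one_mem _)))

theorem statement17 :
    ∀ u ∈ ([theta F, vartheta F, Rel F * Lel F, Lel F * Rel F,
        Rel F * Lel F - Lel F * Rel F] : List (T F)),
      ∀ v ∈ ([theta F, vartheta F, Rel F * Lel F, Lel F * Rel F,
        Rel F * Lel F - Lel F * Rel F] : List (T F)),
        Commute u v := by
  have hmem : ∀ w ∈ ([theta F, vartheta F, Rel F * Lel F, Lel F * Rel F,
      Rel F * Lel F - Lel F * Rel F] : List (T F)), w ∈ tensorYLamSubalgebra F := by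
    simpa using ⟨theta_mem_tensorYLamSubalgebra F, vartheta_mem_tensorYLamSubalgebra F,
      Rel_mul_Lel_mem_tensorYLamSubalgebra F, Lel_mul_Rel_mem_tensorYLamSubalgebra F,
      sub_mem (Rel_mul_Lel_mem_tensorYLamSubalgebra F) (Lel_mul_Rel_mem_tensorYLamSubalgebra F)⟩
  exact fun u hu v hv ↦ commute_of_mem_tensorYLamSubalgebra F (hmem u hu) (hmem v hv)

end RacahPaper
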